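/- arXiv:2211.15952 — 2 statements merged into one kernel-verified Lean document; each statement's English description precedes it below -/
import Mathlib

section
/- Let p be a positive integer and set s = p if p is even, s = 2p if p is odd. Let L be an even lattice and τ ∈ O(L) with τ^p = 1. Then the map c^τ(α,β) = Σ_{i=0}^{p-1} (s/2 + si/p)⟨τ^i(α)|β⟩ mod s defines a well-defined alternating ℤ-bilinear map L × L → ℤ/sℤ which is τ-invariant: c^τ(τα, τβ) = c^τ(α,β). -/
/-- The map c^τ(α,β) = Σ_{i=0}^{p-1}(s/2 + si/p)⟨τ^i α|β⟩ mod s is an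
integer-valued, alternating mod s, τ-invariant, ℤ-bilinear map. -/
theorem stmt_8 {L : Type*} [AddCommGroup L] (p : ℕ) (hp : 0 < p)
    (B : L → L → ℤ)
    (hBadd₁ : ∀ x y z, B (x + y) z = B x z + B y z)
    (hBadd₂ : ∀ x y z, B x (y + z) = B x y + B x z)
    (hBsymm : ∀ x y, B x y = B y x)
    (hBeven : ∀ x, Even (B x x))
    (τ : L →+ L)
    (hτp : ∀ x, (⇑τ)^[p] x = x)
    (hτinv : ∀ x y, B (τ x) (τ y) = B x y)
    (s : ℕ) (hs : s = if Even p then p else 2 * p) :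
    (∀ α β : L, ∃ n : ℤ,
        ∑ i ∈ Finset.range p, ((s : ℚ) / 2 + (s : ℚ) * i / p) * (B ((⇑τ)^[i] α) β : ℚ)
          = (n : ℚ))
    ∧ (∀ α : L, ∃ m : ℤ,
        ∑ i ∈ Finset.range p, ((s : ℚ) / 2 + (s : ℚ) * i / p) * (B ((⇑τ)^[i] α) α : ℚ)
          = (s : ℚ) * (m : ℚ))
    ∧ (∀ α β : L,
        ∑ i ∈ Finset.range p, ((s : ℚ) / 2 + (s : ℚ) * i / p) * (B ((⇑τ)^[i] (τ α)) (τ β) : ℚ)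
        = ∑ i ∈ Finset.range p, ((s : ℚ) / 2 + (s : ℚ) * i / p) * (B ((⇑τ)^[i] α) β : ℚ))
    ∧ (∀ α α' β : L,
        ∑ i ∈ Finset.range p, ((s : ℚ) / 2 + (s : ℚ) * i / p) * (B ((⇑τ)^[i] (α + α')) β : ℚ)
        = (∑ i ∈ Finset.range p, ((s : ℚ) / 2 + (s : ℚ) * i / p) * (B ((⇑τ)^[i] α) β : ℚ))
          + ∑ i ∈ Finset.range p, ((s : ℚ) / 2 + (s : ℚ) * i / p) * (B ((⇑τ)^[i] α') β : ℚ))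
    ∧ (∀ α β β' : L,
        ∑ i ∈ Finset.range p, ((s : ℚ) / 2 + (s : ℚ) * i / p) * (B ((⇑τ)^[i] α) (β + β') : ℚ)
        = (∑ i ∈ Finset.range p, ((s : ℚ) / 2 + (s : ℚ) * i / p) * (B ((⇑τ)^[i] α) β : ℚ))
          + ∑ i ∈ Finset.range p, ((s : ℚ) / 2 + (s : ℚ) * i / p) * (B ((⇑τ)^[i] α) β' : ℚ)) := by

  have hpQ : (p : ℚ) ≠ 0 := Nat.cast_ne_zero.mpr hp.ne'
  obtain ⟨t, u, hpt, h2u⟩ : ∃ t u : ℕ, s = p * t ∧ s = 2 * u := by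
    rcases Nat.even_or_odd p with he | ho
    · obtain ⟨k, hk⟩ := id he
      refine ⟨1, k, ?_, ?_⟩ <;> simp only [hs, if_pos he] <;> omega
    · refine ⟨2, p, ?_, ?_⟩ <;>
        simp only [hs, if_neg (Nat.not_even_iff_odd.mpr ho)] <;> ring
  have hsQ2 : (s : ℚ) = 2 * u := by exact_mod_cast congrArg (Nat.cast (R := ℚ)) h2u
  have hsQp : (s : ℚ) = p * t := by exact_mod_cast congrArg (Nat.cast (R := ℚ)) hpt
  have hcoef : ∀ i : ℕ, (s : ℚ) / 2 + (s : ℚ) * i / p = (u : ℚ) + (t : ℚ) * i := by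
    intro i
    have e1 : (s : ℚ) / 2 = u := by rw [hsQ2]; ring
    have e2 : (s : ℚ) * i / p = (t : ℚ) * i := by rw [hsQp]; field_simp
    rw [e1, e2]
  have hτadd : ∀ (i : ℕ) (x y : L), (⇑τ)^[i] (x + y) = (⇑τ)^[i] x + (⇑τ)^[i] y := by
    intro i
    induction i with
    | zero => intro x y; simp
    | succ n ih =>
      intro x y
      simp [Function.iterate_succ_apply', ih, map_add]
  have hBinviter : ∀ (i : ℕ) (x y : L), B ((⇑τ)^[i] x) ((⇑τ)^[i] y) = B x y := by
    intro i
    induction i with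
    | zero => intro x y; simp
    | succ n ih =>
      intro x y
      rw [Function.iterate_succ_apply', Function.iterate_succ_apply', hτinv, ih]
  have hrefl : ∀ (i : ℕ), i ≤ p → ∀ x : L, B ((⇑τ)^[p - i] x) x = B ((⇑τ)^[i] x) x := by
    intro i hi x
    have h3 : (⇑τ)^[i] ((⇑τ)^[p - i] x) = x := by
      rw [← Function.iterate_add_apply, Nat.add_sub_cancel' hi, hτp]
    calc B ((⇑τ)^[p - i] x) x
        = B ((⇑τ)^[i] ((⇑τ)^[p - i] x)) ((⇑τ)^[i] x) := (hBinviter i _ _).symm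
      _ = B x ((⇑τ)^[i] x) := by rw [h3]
      _ = B ((⇑τ)^[i] x) x := hBsymm _ _
  refine ⟨?_, ?_, ?_, ?_, ?_⟩
  · -- integer-valued
    intro α β
    refine ⟨∑ i ∈ Finset.range p, ((u : ℤ) + (t : ℤ) * i) * B ((⇑τ)^[i] α) β, ?_⟩
    simp only [hcoef]
    push_cast
    rfl
  · -- alternating mod s
    intro α
    obtain ⟨k, hk⟩ := hBeven α
    refine ⟨(∑ i ∈ Finset.range p, B ((⇑τ)^[i] α) α) - k, ?_⟩
    simp only [hcoef]
    set a : ℕ → ℚ := fun i => ((B ((⇑τ)^[i] α) α : ℤ) : ℚ) with hadef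
    have ha0 : a 0 = 2 * (k : ℚ) := by
      simp only [hadef, Function.iterate_zero, id]
      rw [hk]; push_cast; ring
    have hasym : ∀ i ∈ Finset.Ico 1 p, a (p - i) = a i := by
      intro i hi
      simp only [Finset.mem_Ico] at hi
      simp only [hadef]
      exact_mod_cast hrefl i (le_of_lt hi.2) α
    have hzero : ∑ i ∈ Finset.Ico 1 p, ((u : ℚ) + (t : ℚ) * i - s) * a i = 0 := by
      refine Finset.sum_involution (fun i _ => p - i) ?_ ?_ ?_ ?_
      · intro i hi
        have hmem := hi
        simp only [Finset.mem_Ico] at hmem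
        have hsub : ((p - i : ℕ) : ℚ) = (p : ℚ) - i := by
          rw [Nat.cast_sub (le_of_lt hmem.2)]
        rw [hasym i hi, hsub]
        have htp : (t : ℚ) * p = s := by rw [hsQp]; ring
        have hc : ((u : ℚ) + (t : ℚ) * i - s) + ((u : ℚ) + (t : ℚ) * ((p : ℚ) - i) - s) = 0 := by
          linarith [hsQ2, htp]
        linear_combination (a i) * hc
      · intro i hi hne heq
        simp only [Finset.mem_Ico] at hi
        have heq' : p - i = i := heq
        apply hne
        have hpi : p = 2 * i := by omega
        have h2i : (p : ℚ) = 2 * i := by exact_mod_cast congrArg (Nat.cast (R := ℚ)) hpi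
        have hs2it : (s : ℚ) = 2 * ((t : ℚ) * i) := by rw [hsQp, h2i]; ring
        have hc : (u : ℚ) + (t : ℚ) * i - s = 0 := by linarith [hsQ2]
        show ((u : ℚ) + (t : ℚ) * i - s) * a i = 0
        rw [hc, zero_mul]
      · intro i hi
        simp only [Finset.mem_Ico] at hi
        show p - i ∈ Finset.Ico 1 p
        simp only [Finset.mem_Ico]
        omega
      · intro i hi
        simp only [Finset.mem_Ico] at hi
        show p - (p - i) = i
        omega
    have hsplit : ∀ f : ℕ → ℚ, ∑ i ∈ Finset.range p, f i = f 0 + ∑ i ∈ Finset.Ico 1 p, f i := by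
      intro f
      rw [Finset.range_eq_Ico, Finset.sum_eq_sum_Ico_succ_bot hp]
    have step1 : ∑ i ∈ Finset.range p, ((u : ℚ) + (t : ℚ) * i) * a i
        = (s : ℚ) * (∑ i ∈ Finset.range p, a i)
          + ∑ i ∈ Finset.range p, ((u : ℚ) + (t : ℚ) * i - s) * a i := by
      rw [Finset.mul_sum, ← Finset.sum_add_distrib]
      exact Finset.sum_congr rfl fun i _ => by ring
    have step2 : ∑ i ∈ Finset.range p, ((u : ℚ) + (t : ℚ) * i - s) * a i
        = - (s : ℚ) * k := by
      rw [hsplit, hzero, ha0]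
      push_cast
      rw [hsQ2]
      ring
    rw [step1, step2]
    push_cast
    ring
  · -- τ-invariance
    intro α β
    refine Finset.sum_congr rfl fun i _ => ?_
    have hcomm : (⇑τ)^[i] (τ α) = τ ((⇑τ)^[i] α) := by
      rw [← Function.iterate_succ_apply, Function.iterate_succ_apply']
    rw [hcomm, hτinv]
  · -- additivity in first argument
    intro α α' β
    rw [← Finset.sum_add_distrib]
    refine Finset.sum_congr rfl fun i _ => ?_
    rw [hτadd, hBadd₁]
    push_cast
    ring
  · -- additivity in second argument
    intro α β β'
    rw [← Finset.sum_add_distrib]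
    refine Finset.sum_congr rfl fun i _ => ?_
    rw [hBadd₂]
    push_cast
    ring
end

section
/- Suppose V = ⊕_{i,j ∈ ℤ/p} V^{i,j} is a bigraded (not necessarily associative) ℂ-algebra with products u_n v (n ∈ ℤ) satisfying V^{i,j} · V^{k,ℓ} ⊆ V^{i+k, j+ℓ}, and Φ is an anti-linear map with Φ(u_n v) = Φ(u)_n Φ(v) whenever u ∈ V^{0,j} ∪ V^{i,0} or v ∈ V^{0,j} ∪ V^{i,0}. If V^{0,*} and V^{*,0} generate V under the products (every V^{k,ℓ} is spanned by products x_r y with x ∈ V^{0,ℓ}, y ∈ V^{k,0}) and Φ satisfies a Borcherds-type compatibility ((x_r y)_q u expansion in terms of x_{r-i}(y_{q+i}u) and y_{q+r-i}(x_i u)), then Φ(u_n v) = Φ(u)_n Φ(v) for all u, v ∈ V. -/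
open Finset

namespace Stmt16Aux

variable {V : Type*} [AddCommGroup V] [Module ℂ V]

lemma sum_split {N : ℕ} (c : ℕ → ℂ) (e : ℂ) (P P' Q Q' : ℕ → V) :
    ∑ i ∈ range N, c i • ((P i + P' i) - e • (Q i + Q' i))
      = (∑ i ∈ range N, c i • (P i - e • Q i)) + ∑ i ∈ range N, c i • (P' i - e • Q' i) := by
  rw [← Finset.sum_add_distrib]
  refine Finset.sum_congr rfl fun i _ => ?_
  module

lemma sum_smul_split {N : ℕ} (t : ℂ) (c : ℕ → ℂ) (e : ℂ) (P Q : ℕ → V) :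
    ∑ i ∈ range N, c i • (t • P i - e • (t • Q i))
      = t • ∑ i ∈ range N, c i • (P i - e • Q i) := by
  rw [Finset.smul_sum]
  refine Finset.sum_congr rfl fun i _ => ?_
  module

noncomputable def TriAux (mul : ℤ → V →ₗ[ℂ] V →ₗ[ℂ] V) (r q : ℤ) (N : ℕ) :
    V →ₗ[ℂ] V →ₗ[ℂ] V →ₗ[ℂ] V where
  toFun x :=
    { toFun := fun y =>
        { toFun := fun u => mul q (mul r x y) u - ∑ i ∈ Finset.range N,
            (((-1 : ℂ) ^ i * ((∏ k ∈ Finset.range i, ((r : ℂ) - (k : ℂ))) / (Nat.factorial i : ℂ))) •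
              (mul (r - (i : ℤ)) x (mul (q + (i : ℤ)) y u)
                - ((-1 : ℂ) ^ r) • mul (q + r - (i : ℤ)) y (mul (i : ℤ) x u)))
          map_add' := by
            intro u u'
            simp only [map_add]
            rw [sum_split]
            abel
          map_smul' := by
            intro c u
            simp only [map_smul, RingHom.id_apply]
            rw [sum_smul_split]
            module }
      map_add' := by
        intro y y'
        ext u
        simp only [LinearMap.coe_mk, AddHom.coe_mk, LinearMap.add_apply, map_add]
        rw [sum_split]
        abel
      map_smul' := by
        intro c y
        ext u
        simp only [LinearMap.coe_mk, AddHom.coe_mk, LinearMap.smul_apply, map_smul,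
          RingHom.id_apply]
        rw [sum_smul_split]
        module }
  map_add' := by
    intro x x'
    ext y u
    simp only [LinearMap.coe_mk, AddHom.coe_mk, LinearMap.add_apply, map_add]
    rw [sum_split]
    abel
  map_smul' := by
    intro c x
    ext y u
    simp only [LinearMap.coe_mk, AddHom.coe_mk, LinearMap.smul_apply, map_smul,
      RingHom.id_apply]
    rw [sum_smul_split]
    module

lemma TriAux_apply (mul : ℤ → V →ₗ[ℂ] V →ₗ[ℂ] V) (r q : ℤ) (N : ℕ) (x y u : V) :
    TriAux mul r q N x y u = mul q (mul r x y) u - ∑ i ∈ Finset.range N,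
      (((-1 : ℂ) ^ i * ((∏ k ∈ Finset.range i, ((r : ℂ) - (k : ℂ))) / (Nat.factorial i : ℂ))) •
        (mul (r - (i : ℤ)) x (mul (q + (i : ℤ)) y u)
          - ((-1 : ℂ) ^ r) • mul (q + r - (i : ℤ)) y (mul (i : ℤ) x u))) := rfl

lemma TriAux_expand (mul : ℤ → V →ₗ[ℂ] V →ₗ[ℂ] V) (r q : ℤ) (N : ℕ)
    (t : ℂ) (x x' y y' u u' : V) :
    TriAux mul r q N (x + t • x') (y + t • y') (u + t • u')
      = TriAux mul r q N x y u
        + t • (TriAux mul r q N x' y u + TriAux mul r q N x y' u + TriAux mul r q N x y u')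
        + t ^ 2 • (TriAux mul r q N x' y' u + TriAux mul r q N x' y u'
            + TriAux mul r q N x y' u')
        + t ^ 3 • TriAux mul r q N x' y' u' := by
  simp only [map_add, map_smul, LinearMap.add_apply, LinearMap.smul_apply]
  module

lemma exists_infinite_fiber_nat (f : ℝ → ℕ) : ∃ n, {t : ℝ | f t = n}.Infinite := by
  by_contra h
  push_neg at h
  have huniv : (Set.univ : Set ℝ) = ⋃ n, {t | f t = n} := by
    ext t; simp
  have : (Set.univ : Set ℝ).Countable := by
    rw [huniv]
    exact Set.countable_iUnion (fun n => (h n).countable)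
  exact Cardinal.not_countable_real this

lemma cubic_vanish (a₀ a₁ a₂ a₃ : V) {T : Set ℝ} (hT : T.Infinite)
    (h : ∀ t ∈ T, a₀ + (t : ℂ) • a₁ + (t : ℂ) ^ 2 • a₂ + (t : ℂ) ^ 3 • a₃ = 0) :
    a₀ = 0 ∧ a₃ = 0 := by
  have hd : ∀ f : Module.Dual ℂ V, f a₀ = 0 ∧ f a₃ = 0 := by
    intro f
    set P : Polynomial ℂ := Polynomial.C (f a₀) + Polynomial.C (f a₁) * Polynomial.X
      + Polynomial.C (f a₂) * Polynomial.X ^ 2 + Polynomial.C (f a₃) * Polynomial.X ^ 3 with hP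
    have hroot : ∀ t ∈ T, P.IsRoot ((t : ℝ) : ℂ) := by
      intro t ht
      have h0 := congrArg f (h t ht)
      simp only [map_add, map_smul, map_zero, smul_eq_mul] at h0
      simp only [Polynomial.IsRoot, P, Polynomial.eval_add, Polynomial.eval_mul,
        Polynomial.eval_C, Polynomial.eval_X, Polynomial.eval_pow]
      linear_combination h0
    have himg : {z : ℂ | P.IsRoot z}.Infinite := by
      have : ((fun t : ℝ => (t : ℂ)) '' T).Infinite :=
        Set.Infinite.image (fun a _ b _ hab => by exact_mod_cast hab) hT
      refine this.mono ?_
      rintro z ⟨t, ht, rfl⟩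
      exact hroot t ht
    have hP0 : P = 0 := P.eq_zero_of_infinite_isRoot himg
    constructor
    · have := congrArg (fun Q => Polynomial.coeff Q 0) hP0
      simpa [P] using this
    · have := congrArg (fun Q => Polynomial.coeff Q 3) hP0
      simpa [P, Polynomial.coeff_X_pow] using this
  constructor
  · exact (Module.forall_dual_apply_eq_zero_iff ℂ a₀).mp fun f => (hd f).1
  · exact (Module.forall_dual_apply_eq_zero_iff ℂ a₃).mp fun f => (hd f).2

lemma star_coeff (r : ℤ) (i : ℕ) :
    (starRingEnd ℂ) ((-1 : ℂ) ^ i * ((∏ k ∈ Finset.range i, ((r : ℂ) - (k : ℂ)))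
        / (Nat.factorial i : ℂ)))
      = (-1 : ℂ) ^ i * ((∏ k ∈ Finset.range i, ((r : ℂ) - (k : ℂ))) / (Nat.factorial i : ℂ)) := by
  simp [map_mul, map_div₀, map_pow, map_prod, map_sub]

lemma star_neg_one_zpow (r : ℤ) : (starRingEnd ℂ) ((-1 : ℂ) ^ r) = (-1 : ℂ) ^ r := by
  rw [map_zpow₀]
  simp

lemma key {p : ℕ} (Vsub : ZMod p → ZMod p → Submodule ℂ V)
    (mul : ℤ → V →ₗ[ℂ] V →ₗ[ℂ] V)
    (Φ : V → V)
    (hadd : ∀ u v, Φ (u + v) = Φ u + Φ v)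
    (hsmul : ∀ (c : ℂ) v, Φ (c • v) = (starRingEnd ℂ) c • Φ v)
    (hgen : ∀ (n : ℤ) (u v : V),
      ((∃ j, u ∈ Vsub 0 j) ∨ (∃ i, u ∈ Vsub i 0)
        ∨ (∃ j, v ∈ Vsub 0 j) ∨ (∃ i, v ∈ Vsub i 0)) →
      Φ (mul n u v) = mul n (Φ u) (Φ v))
    (hborch : ∀ (r q : ℤ) (x y u : V), ∃ N : ℕ,
      mul q (mul r x y) u = ∑ i ∈ Finset.range N,
        (((-1 : ℂ) ^ i * ((∏ k ∈ Finset.range i, ((r : ℂ) - (k : ℂ))) / (Nat.factorial i : ℂ))) •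
          (mul (r - (i : ℤ)) x (mul (q + (i : ℤ)) y u)
            - ((-1 : ℂ) ^ r) • mul (q + r - (i : ℤ)) y (mul (i : ℤ) x u))))
    (k l : ZMod p) (r : ℤ) (x y : V) (hx : x ∈ Vsub 0 l) (hy : y ∈ Vsub k 0)
    (m : ℤ) (w : V) :
    Φ (mul m (mul r x y) w) = mul m (mul r (Φ x) (Φ y)) (Φ w) := by
  obtain ⟨N, hN⟩ := exists_infinite_fiber_nat (fun t : ℝ =>
    (hborch r m (x + (t : ℂ) • Φ x) (y + (t : ℂ) • Φ y) (w + (t : ℂ) • Φ w)).choose)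
  have hzero : ∀ t ∈ {t : ℝ |
      (hborch r m (x + (t : ℂ) • Φ x) (y + (t : ℂ) • Φ y) (w + (t : ℂ) • Φ w)).choose = N},
      TriAux mul r m N (x + (t : ℂ) • Φ x) (y + (t : ℂ) • Φ y) (w + (t : ℂ) • Φ w) = 0 := by
    intro t ht
    have hspec := (hborch r m (x + (t : ℂ) • Φ x) (y + (t : ℂ) • Φ y)
      (w + (t : ℂ) • Φ w)).choose_spec
    rw [Set.mem_setOf_eq] at ht
    rw [ht] at hspec
    rw [TriAux_apply]
    exact sub_eq_zero_of_eq hspec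
  have hcube := cubic_vanish (TriAux mul r m N x y w)
    (TriAux mul r m N (Φ x) y w + TriAux mul r m N x (Φ y) w + TriAux mul r m N x y (Φ w))
    (TriAux mul r m N (Φ x) (Φ y) w + TriAux mul r m N (Φ x) y (Φ w)
      + TriAux mul r m N x (Φ y) (Φ w))
    (TriAux mul r m N (Φ x) (Φ y) (Φ w)) hN
    (fun t ht => by rw [← TriAux_expand]; exact hzero t ht)
  have eq1 : mul m (mul r x y) w = ∑ i ∈ Finset.range N,
      (((-1 : ℂ) ^ i * ((∏ k ∈ Finset.range i, ((r : ℂ) - (k : ℂ))) / (Nat.factorial i : ℂ))) •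
        (mul (r - (i : ℤ)) x (mul (m + (i : ℤ)) y w)
          - ((-1 : ℂ) ^ r) • mul (m + r - (i : ℤ)) y (mul (i : ℤ) x w))) := by
    have := hcube.1
    rw [TriAux_apply] at this
    exact eq_of_sub_eq_zero this
  have eq2 : mul m (mul r (Φ x) (Φ y)) (Φ w) = ∑ i ∈ Finset.range N,
      (((-1 : ℂ) ^ i * ((∏ k ∈ Finset.range i, ((r : ℂ) - (k : ℂ))) / (Nat.factorial i : ℂ))) •
        (mul (r - (i : ℤ)) (Φ x) (mul (m + (i : ℤ)) (Φ y) (Φ w))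
          - ((-1 : ℂ) ^ r) • mul (m + r - (i : ℤ)) (Φ y) (mul (i : ℤ) (Φ x) (Φ w)))) := by
    have := hcube.2
    rw [TriAux_apply] at this
    exact eq_of_sub_eq_zero this
  let Φl : V →ₛₗ[starRingEnd ℂ] V := { toFun := Φ, map_add' := hadd, map_smul' := hsmul }
  have hΦl : ∀ z : V, Φl z = Φ z := fun _ => rfl
  calc Φ (mul m (mul r x y) w)
      = Φl (∑ i ∈ Finset.range N,
          (((-1 : ℂ) ^ i * ((∏ k ∈ Finset.range i, ((r : ℂ) - (k : ℂ)))
              / (Nat.factorial i : ℂ))) •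
            (mul (r - (i : ℤ)) x (mul (m + (i : ℤ)) y w)
              - ((-1 : ℂ) ^ r) • mul (m + r - (i : ℤ)) y (mul (i : ℤ) x w)))) := by
        rw [hΦl, eq1]
    _ = ∑ i ∈ Finset.range N,
          (((-1 : ℂ) ^ i * ((∏ k ∈ Finset.range i, ((r : ℂ) - (k : ℂ)))
              / (Nat.factorial i : ℂ))) •
            (mul (r - (i : ℤ)) (Φ x) (mul (m + (i : ℤ)) (Φ y) (Φ w))
              - ((-1 : ℂ) ^ r) • mul (m + r - (i : ℤ)) (Φ y) (mul (i : ℤ) (Φ x) (Φ w)))) := by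
        rw [map_sum]
        refine Finset.sum_congr rfl fun i _ => ?_
        rw [map_smulₛₗ, star_coeff, map_sub, map_smulₛₗ, star_neg_one_zpow]
        simp only [hΦl]
        rw [hgen (r - (i : ℤ)) x (mul (m + (i : ℤ)) y w) (Or.inl ⟨l, hx⟩),
          hgen (m + (i : ℤ)) y w (Or.inr (Or.inl ⟨k, hy⟩)),
          hgen (m + r - (i : ℤ)) y (mul (i : ℤ) x w) (Or.inr (Or.inl ⟨k, hy⟩)),
          hgen (i : ℤ) x w (Or.inl ⟨l, hx⟩)]
    _ = mul m (mul r (Φ x) (Φ y)) (Φ w) := eq2.symm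

end Stmt16Aux



/-- An anti-linear map compatible with the products on the generating
subspaces V^{0,*} and V^{*,0}, given the Borcherds identity and the spanning
hypothesis, is compatible with all products. -/
theorem stmt_16 {p : ℕ} [NeZero p] {V : Type*} [AddCommGroup V] [Module ℂ V]
    (Vsub : ZMod p → ZMod p → Submodule ℂ V)
    (hdecomp : (⨆ i, ⨆ j, Vsub i j) = ⊤)
    (mul : ℤ → V →ₗ[ℂ] V →ₗ[ℂ] V)
    (hgrade : ∀ (i j k l : ZMod p) (n : ℤ), ∀ u ∈ Vsub i j, ∀ v ∈ Vsub k l,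
      mul n u v ∈ Vsub (i + k) (j + l))
    (Φ : V → V)
    (hadd : ∀ u v, Φ (u + v) = Φ u + Φ v)
    (hsmul : ∀ (c : ℂ) v, Φ (c • v) = (starRingEnd ℂ) c • Φ v)
    (hgen : ∀ (n : ℤ) (u v : V),
      ((∃ j, u ∈ Vsub 0 j) ∨ (∃ i, u ∈ Vsub i 0)
        ∨ (∃ j, v ∈ Vsub 0 j) ∨ (∃ i, v ∈ Vsub i 0)) →
      Φ (mul n u v) = mul n (Φ u) (Φ v))
    (hspan : ∀ k l : ZMod p, (Vsub k l : Set V) ⊆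
      (Submodule.span ℂ {w : V | ∃ (r : ℤ) (x y : V),
        x ∈ Vsub 0 l ∧ y ∈ Vsub k 0 ∧ w = mul r x y} : Set V))
    (hborch : ∀ (r q : ℤ) (x y u : V), ∃ N : ℕ,
      mul q (mul r x y) u = ∑ i ∈ Finset.range N,
        (((-1 : ℂ) ^ i * ((∏ k ∈ Finset.range i, ((r : ℂ) - (k : ℂ))) / (Nat.factorial i : ℂ))) •
          (mul (r - (i : ℤ)) x (mul (q + (i : ℤ)) y u)
            - ((-1 : ℂ) ^ r) • mul (q + r - (i : ℤ)) y (mul (i : ℤ) x u)))) :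
    ∀ (n : ℤ) (u v : V), Φ (mul n u v) = mul n (Φ u) (Φ v) := by

  have hΦ0 : Φ 0 = 0 := by simpa using hsmul 0 0
  set P : V → Prop := fun u => ∀ (n : ℤ) (v : V), Φ (mul n u v) = mul n (Φ u) (Φ v) with hP
  have hP0 : P 0 := by
    intro n v
    simp [hΦ0]
  have hPadd : ∀ a b : V, P a → P b → P (a + b) := by
    intro a b ha hb n v
    rw [hadd, map_add, LinearMap.add_apply, hadd, ha, hb, map_add, LinearMap.add_apply]
  have hPsmul : ∀ (c : ℂ) (a : V), P a → P (c • a) := by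
    intro c a ha n v
    rw [map_smul, LinearMap.smul_apply, hsmul, hsmul, ha, map_smul, LinearMap.smul_apply]
  suffices H : ∀ u, P u by
    intro n u v; exact H u n v
  intro u
  have hu : u ∈ ⨆ i, ⨆ j, Vsub i j := by rw [hdecomp]; trivial
  refine Submodule.iSup_induction (motive := P) _ hu (fun i z hz => ?_) hP0 hPadd
  refine Submodule.iSup_induction (motive := P) _ hz (fun j z' hz' => ?_) hP0 hPadd
  have hsp := hspan i j hz'
  refine Submodule.span_induction (p := fun w _ => P w) ?_ hP0
    (fun a b _ _ ha hb => hPadd a b ha hb) (fun c a _ ha => hPsmul c a ha) hsp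
  rintro w ⟨r, x, y, hx, hy, rfl⟩
  intro n v
  rw [hgen r x y (Or.inl ⟨j, hx⟩)]
  exact Stmt16Aux.key Vsub mul Φ hadd hsmul hgen hborch i j r x y hx hy n v
end
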